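/- arXiv:2301.01260 — 4 statements merged into one kernel-verified Lean document; each statement's English description precedes it below -/
import Mathlib

section
/- For all real numbers t ≤ v, ∫_t^v B⁺(t,u,v) ψ_r(t,u) Σ_rr(t,u) du = ½ Σ_zz(t,v). -/
open MeasureTheory intervalIntegral

/-- Mean-reversion factor `φ_r(s,v) := exp(−∫_s^v α u du)`. -/
noncomputable def phiR (α : ℝ → ℝ) (s v : ℝ) : ℝ := Real.exp (-∫ u in s..v, α u)

/-- Short-rate variance `Σ_rr(s,v) := ∫_s^v φ_r(u,v)² σ(u)² du`. -/
noncomputable def sigmaRR (α σ : ℝ → ℝ) (s v : ℝ) : ℝ :=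
  ∫ u in s..v, (phiR α u v) ^ 2 * (σ u) ^ 2

/-- Smile dispersion factor `ψ_r(s,v) := exp(½ γ(v)² Σ_rr(s,v))`. -/
noncomputable def psiR (α σ γ : ℝ → ℝ) (s v : ℝ) : ℝ :=
  Real.exp ((1 / 2) * (γ v) ^ 2 * sigmaRR α σ s v)

/-- Covariance `Σ_rz(s,v) := ∫_s^v ψ_r(s,u) φ_r(u,v) Σ_rr(s,u) du`. -/
noncomputable def sigmaRZ (α σ γ : ℝ → ℝ) (s v : ℝ) : ℝ :=
  ∫ u in s..v, psiR α σ γ s u * phiR α u v * sigmaRR α σ s u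

/-- Integrated-rate variance `Σ_zz(s,v) := 2 ∫_s^v ψ_r(s,u) Σ_rz(s,u) du`. -/
noncomputable def sigmaZZ (α σ γ : ℝ → ℝ) (s v : ℝ) : ℝ :=
  2 * ∫ u in s..v, psiR α σ γ s u * sigmaRZ α σ γ s u

/-- `B*(s,v) := ∫_s^v ψ_r(s,u) φ_r(s,u) du`. -/
noncomputable def Bstar (α σ γ : ℝ → ℝ) (s v : ℝ) : ℝ :=
  ∫ u in s..v, psiR α σ γ s u * phiR α s u

/-- `B⁺(s,t₁,v) := (B*(s,v) − B*(s,t₁)) / φ_r(s,t₁)`. -/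
noncomputable def Bplus (α σ γ : ℝ → ℝ) (s t₁ v : ℝ) : ℝ :=
  (Bstar α σ γ s v - Bstar α σ γ s t₁) / phiR α s t₁

private lemma primitive_hasDerivAt {f : ℝ → ℝ} (hf : Continuous f) (a u : ℝ) :
    HasDerivAt (fun x => ∫ w in a..x, f w) (f u) u :=
  intervalIntegral.integral_hasDerivAt_right (hf.intervalIntegrable a u)
    (hf.stronglyMeasurableAtFilter volume _) hf.continuousAt

private lemma primitive_continuous {f : ℝ → ℝ} (hf : Continuous f) (a : ℝ) :
    Continuous fun x => ∫ w in a..x, f w := by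
  rw [continuous_iff_continuousAt]
  exact fun u => (primitive_hasDerivAt hf a u).continuousAt

/-- For `t ≤ v`, `∫_t^v B⁺(t,u,v) ψ_r(t,u) Σ_rr(t,u) du = ½ Σ_zz(t,v)`. -/
theorem Bplus_integral_identity (α σ γ : ℝ → ℝ)
    (hα : Continuous α) (hσ : Continuous σ) (hγ : Continuous γ)
    (t v : ℝ) (htv : t ≤ v) :
    (∫ u in t..v, Bplus α σ γ t u v * psiR α σ γ t u * sigmaRR α σ t u)
      = (1 / 2) * sigmaZZ α σ γ t v := by
  set p : ℝ → ℝ := fun u => phiR α t u with hp_def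
  have hp_cont : Continuous p := by
    have : Continuous fun u => ∫ w in t..u, α w := primitive_continuous hα t
    exact Real.continuous_exp.comp this.neg
  have hp_pos : ∀ u, 0 < p u := fun u => Real.exp_pos _
  have hp_ne : ∀ u, p u ≠ 0 := fun u => (hp_pos u).ne'
  -- splitting of phiR
  have phi_split : ∀ w u : ℝ, phiR α w u = p u / p w := by
    intro w u
    simp only [hp_def, phiR, ← Real.exp_sub]
    congr 1
    have h := intervalIntegral.integral_interval_sub_left (μ := volume) (f := α)
      (hα.intervalIntegrable t u) (hα.intervalIntegrable t w)
    linarith [h]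
  -- S
  set S : ℝ → ℝ := fun u => ∫ w in t..u, (σ w / p w) ^ 2 with hS_def
  have hSint_cont : Continuous fun w => (σ w / p w) ^ 2 := ((hσ.div hp_cont hp_ne).pow 2)
  have hS_cont : Continuous S := primitive_continuous hSint_cont t
  have hS_deriv : ∀ u, HasDerivAt S ((σ u / p u) ^ 2) u := primitive_hasDerivAt hSint_cont t
  have sigmaRR_eq : ∀ u, sigmaRR α σ t u = (p u) ^ 2 * S u := by
    intro u
    rw [hS_def, sigmaRR, ← intervalIntegral.integral_const_mul]
    refine intervalIntegral.integral_congr fun w _ => ?_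
    rw [phi_split w u, div_pow, div_pow]
    field_simp
  have hpsi_cont : Continuous fun u => psiR α σ γ t u := by
    have hSig : Continuous fun u => sigmaRR α σ t u :=
      ((hp_cont.pow 2).mul hS_cont).congr fun u => (sigmaRR_eq u).symm
    unfold psiR
    exact Real.continuous_exp.comp ((continuous_const.mul (hγ.pow 2)).mul hSig)
  -- b and g
  set b : ℝ → ℝ := fun w => psiR α σ γ t w * p w with hb_def
  have hb_cont : Continuous b := hpsi_cont.mul hp_cont
  set g : ℝ → ℝ := fun w => psiR α σ γ t w * p w * S w with hg_def
  have hg_cont : Continuous g := (hpsi_cont.mul hp_cont).mul hS_cont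
  set G : ℝ → ℝ := fun u => ∫ w in t..u, g w with hG_def
  have hG_cont : Continuous G := primitive_continuous hg_cont t
  have hG_deriv : ∀ u, HasDerivAt G (g u) u := primitive_hasDerivAt hg_cont t
  have hB_eq : ∀ u, Bstar α σ γ t u = ∫ w in t..u, b w := fun u => rfl
  have hB_deriv : ∀ u, HasDerivAt (Bstar α σ γ t) (b u) u := by
    intro u
    have := primitive_hasDerivAt hb_cont t u
    exact this.congr_of_eventuallyEq (Filter.Eventually.of_forall fun x => (hB_eq x))
  have hB_cont : Continuous (Bstar α σ γ t) := by
    rw [continuous_iff_continuousAt]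
    exact fun u => (hB_deriv u).differentiableAt.continuousAt
  have sigmaRZ_eq : ∀ u, sigmaRZ α σ γ t u = p u * G u := by
    intro u
    rw [hG_def, sigmaRZ, ← intervalIntegral.integral_const_mul]
    refine intervalIntegral.integral_congr fun w _ => ?_
    rw [phi_split w u, sigmaRR_eq w, hg_def]
    field_simp [hp_ne w]
  -- integration by parts
  set Bv : ℝ := Bstar α σ γ t v with hBv_def
  have hF_deriv : ∀ u ∈ Set.uIcc t v,
      HasDerivAt (fun x => (Bv - Bstar α σ γ t x) * G x)
        ((0 - b u) * G u + (Bv - Bstar α σ γ t u) * g u) u := fun u _ =>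
    ((hasDerivAt_const u Bv).sub (hB_deriv u)).mul (hG_deriv u)
  have hcontF : Continuous fun u => (0 - b u) * G u + (Bv - Bstar α σ γ t u) * g u := by
    fun_prop
  have key : (∫ u in t..v, ((0 - b u) * G u + (Bv - Bstar α σ γ t u) * g u)) = 0 := by
    rw [intervalIntegral.integral_eq_sub_of_hasDerivAt hF_deriv
      (hcontF.intervalIntegrable t v)]
    simp [hG_def, hBv_def]
  have split : (∫ u in t..v, (Bv - Bstar α σ γ t u) * g u)
      = ∫ u in t..v, b u * G u := by
    have h1 : IntervalIntegrable (fun u => (0 - b u) * G u) volume t v :=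
      (((continuous_const.sub hb_cont).mul hG_cont).intervalIntegrable t v)
    have h2 : IntervalIntegrable (fun u => (Bv - Bstar α σ γ t u) * g u) volume t v :=
      (((continuous_const.sub hB_cont).mul hg_cont).intervalIntegrable t v)
    have := intervalIntegral.integral_add h1 h2
    rw [this] at key
    have h3 : (∫ u in t..v, (0 - b u) * G u) = - ∫ u in t..v, b u * G u := by
      rw [← intervalIntegral.integral_neg]
      refine intervalIntegral.integral_congr fun u _ => by ring
    rw [h3] at key
    linarith
  -- rewrite LHS
  have hLHS : (∫ u in t..v, Bplus α σ γ t u v * psiR α σ γ t u * sigmaRR α σ t u)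
      = ∫ u in t..v, (Bv - Bstar α σ γ t u) * g u := by
    refine intervalIntegral.integral_congr fun u _ => ?_
    rw [Bplus, sigmaRR_eq u, hg_def, ← hBv_def]
    have : phiR α t u = p u := rfl
    rw [this]
    field_simp [hp_ne u]
  -- rewrite RHS
  have hRHS : (1 / 2) * sigmaZZ α σ γ t v = ∫ u in t..v, b u * G u := by
    rw [sigmaZZ]
    rw [show (1 : ℝ) / 2 * (2 * ∫ u in t..v, psiR α σ γ t u * sigmaRZ α σ γ t u)
      = ∫ u in t..v, psiR α σ γ t u * sigmaRZ α σ γ t u by ring]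
    refine intervalIntegral.integral_congr fun u _ => ?_
    rw [sigmaRZ_eq u, hb_def]
    ring
  rw [hLHS, split, hRHS]
end

section
/- For all real numbers t ≤ v, ∫_t^v B*(t,u) ψ_r(t,u) (Σ_rr(t,u)/φ_r(t,u)) du = B*(t,v) Σ_rz(t,v)/φ_r(t,v) − ½ Σ_zz(t,v). (Here one uses that Σ_rz(t,v)/φ_r(t,v) = ∫_t^v ψ_r(t,u) Σ_rr(t,u)/φ_r(t,u) du.) -/
open MeasureTheory intervalIntegral

/- ### Auxiliary lemmas -/

lemma prim_hasDerivAt {f : ℝ → ℝ} (hf : Continuous f) (a x : ℝ) :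
    HasDerivAt (fun v => ∫ u in a..v, f u) (f x) x :=
  intervalIntegral.integral_hasDerivAt_right (hf.intervalIntegrable a x)
    (hf.stronglyMeasurableAtFilter _ _) hf.continuousAt

lemma prim_continuous {f : ℝ → ℝ} (hf : Continuous f) (a : ℝ) :
    Continuous (fun v => ∫ u in a..v, f u) := by
  have : Differentiable ℝ (fun v => ∫ u in a..v, f u) :=
    fun x => (prim_hasDerivAt hf a x).differentiableAt
  exact this.continuous

lemma phiR_pos (α : ℝ → ℝ) (a b : ℝ) : 0 < phiR α a b := Real.exp_pos _

lemma phiR_ne (α : ℝ → ℝ) (a b : ℝ) : phiR α a b ≠ 0 := (phiR_pos α a b).ne'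

lemma phiR_mul {α : ℝ → ℝ} (hα : Continuous α) (a b c : ℝ) :
    phiR α a b * phiR α b c = phiR α a c := by
  unfold phiR
  rw [← Real.exp_add, ← neg_add,
    intervalIntegral.integral_add_adjacent_intervals (hα.intervalIntegrable a b)
      (hα.intervalIntegrable b c)]

lemma phiR_eq_div {α : ℝ → ℝ} (hα : Continuous α) (a b c : ℝ) :
    phiR α b c = phiR α a c / phiR α a b := by
  rw [eq_div_iff (phiR_ne α a b), mul_comm, phiR_mul hα]

lemma phiR_cont {α : ℝ → ℝ} (hα : Continuous α) (t : ℝ) :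
    Continuous (fun v => phiR α t v) := by
  unfold phiR
  exact Real.continuous_exp.comp (prim_continuous hα t).neg

lemma sigmaRR_eq {α : ℝ → ℝ} (hα : Continuous α) (σ : ℝ → ℝ) (t v : ℝ) :
    sigmaRR α σ t v = (phiR α t v) ^ 2 * ∫ u in t..v, (σ u / phiR α t u) ^ 2 := by
  unfold sigmaRR
  rw [← intervalIntegral.integral_const_mul]
  apply intervalIntegral.integral_congr
  intro u _
  dsimp only
  rw [phiR_eq_div hα t u v, div_pow, div_pow]
  field_simp

lemma sigmaRR_cont {α : ℝ → ℝ} (hα : Continuous α) {σ : ℝ → ℝ} (hσ : Continuous σ) (t : ℝ) :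
    Continuous (fun v => sigmaRR α σ t v) := by
  have h : (fun v => sigmaRR α σ t v)
      = fun v => (phiR α t v) ^ 2 * ∫ u in t..v, (σ u / phiR α t u) ^ 2 :=
    funext fun v => sigmaRR_eq hα σ t v
  rw [h]
  exact ((phiR_cont hα t).pow 2).mul
    (prim_continuous ((hσ.div (phiR_cont hα t) (fun u => phiR_ne α t u)).pow 2) t)

lemma psiR_cont {α σ : ℝ → ℝ} (hα : Continuous α) (hσ : Continuous σ) (γ : ℝ → ℝ)
    (hγ : Continuous γ) (t : ℝ) : Continuous (fun v => psiR α σ γ t v) := by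
  unfold psiR
  exact Real.continuous_exp.comp
    (((continuous_const.mul (hγ.pow 2))).mul (sigmaRR_cont hα hσ t))

lemma sigmaRZ_eq {α σ : ℝ → ℝ} (hα : Continuous α) (γ : ℝ → ℝ) (t v : ℝ) :
    sigmaRZ α σ γ t v
      = phiR α t v * ∫ u in t..v, psiR α σ γ t u * sigmaRR α σ t u / phiR α t u := by
  unfold sigmaRZ
  rw [← intervalIntegral.integral_const_mul]
  apply intervalIntegral.integral_congr
  intro u _
  dsimp only
  rw [phiR_eq_div hα t u v]
  field_simp

/-- For `t ≤ v`,
`∫_t^v B*(t,u) ψ_r(t,u) (Σ_rr(t,u)/φ_r(t,u)) du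
  = B*(t,v) Σ_rz(t,v)/φ_r(t,v) − ½ Σ_zz(t,v)`. -/
theorem Bstar_integral_identity (α σ γ : ℝ → ℝ)
    (hα : Continuous α) (hσ : Continuous σ) (hγ : Continuous γ)
    (t v : ℝ) (htv : t ≤ v) :
    (∫ u in t..v, Bstar α σ γ t u * psiR α σ γ t u * (sigmaRR α σ t u / phiR α t u))
      = Bstar α σ γ t v * sigmaRZ α σ γ t v / phiR α t v
        - (1 / 2) * sigmaZZ α σ γ t v := by
  set f : ℝ → ℝ := fun u => psiR α σ γ t u * phiR α t u with hf_def
  set g : ℝ → ℝ := fun u => psiR α σ γ t u * sigmaRR α σ t u / phiR α t u with hg_def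
  have hf : Continuous f := (psiR_cont hα hσ γ hγ t).mul (phiR_cont hα t)
  have hg : Continuous g :=
    ((psiR_cont hα hσ γ hγ t).mul (sigmaRR_cont hα hσ t)).div (phiR_cont hα t)
      (fun u => phiR_ne α t u)
  set F : ℝ → ℝ := fun u => ∫ w in t..u, g w with hF_def
  have hB' : ∀ x ∈ Set.uIcc t v, HasDerivAt (fun u => Bstar α σ γ t u) (f x) x :=
    fun x _ => prim_hasDerivAt hf t x
  have hF' : ∀ x ∈ Set.uIcc t v, HasDerivAt F (g x) x :=
    fun x _ => prim_hasDerivAt hg t x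
  have ibp := intervalIntegral.integral_mul_deriv_eq_deriv_mul hB' hF'
    (hf.intervalIntegrable t v) (hg.intervalIntegrable t v)
  have hBt : Bstar α σ γ t t = 0 := intervalIntegral.integral_same
  have hFt : F t = 0 := intervalIntegral.integral_same
  have hRZ : ∀ u, sigmaRZ α σ γ t u = phiR α t u * F u := fun u => sigmaRZ_eq hα γ t u
  -- rewrite the LHS
  have hLHS : (∫ u in t..v, Bstar α σ γ t u * psiR α σ γ t u * (sigmaRR α σ t u / phiR α t u))
      = ∫ u in t..v, Bstar α σ γ t u * g u := by
    apply intervalIntegral.integral_congr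
    intro u _
    simp only [hg_def]
    ring
  -- rewrite the ZZ term
  have hZZ : sigmaZZ α σ γ t v = 2 * ∫ u in t..v, f u * F u := by
    unfold sigmaZZ
    congr 1
    apply intervalIntegral.integral_congr
    intro u _
    dsimp only
    rw [hRZ u]
    simp only [hf_def]
    ring
  rw [hLHS, ibp, hBt, hFt, hZZ, hRZ v]
  have hφ := phiR_ne α t v
  field_simp
  ring
end

section
/- For every fixed real t, the function v ↦ Σ_rz(t,v) is differentiable on ℝ and satisfies d/dv Σ_rz(t,v) = ψ_r(t,v) Σ_rr(t,v) − α(v) Σ_rz(t,v), with Σ_rz(t,t) = 0. -/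
open MeasureTheory intervalIntegral

lemma myFTC {f : ℝ → ℝ} (hf : Continuous f) (t v : ℝ) :
    HasDerivAt (fun w => ∫ u in t..w, f u) (f v) v :=
  intervalIntegral.integral_hasDerivAt_right (hf.intervalIntegrable t v)
    (hf.stronglyMeasurableAtFilter volume (nhds v)) hf.continuousAt

lemma myCont {f : ℝ → ℝ} (hf : Continuous f) (t : ℝ) :
    Continuous (fun w => ∫ u in t..w, f u) :=
  continuous_iff_continuousAt.2 fun v => (myFTC hf t v).continuousAt


/-- For fixed `t`, `v ↦ Σ_rz(t,v)` is differentiable on `ℝ` and satisfies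
`d/dv Σ_rz(t,v) = ψ_r(t,v) Σ_rr(t,v) − α(v) Σ_rz(t,v)`, with `Σ_rz(t,t) = 0`. -/
theorem sigmaRZ_ode (α σ γ : ℝ → ℝ)
    (hα : Continuous α) (hσ : Continuous σ) (hγ : Continuous γ) (t : ℝ) :
    (∀ v : ℝ, HasDerivAt (fun w => sigmaRZ α σ γ t w)
      (psiR α σ γ t v * sigmaRR α σ t v - α v * sigmaRZ α σ γ t v) v) ∧
    sigmaRZ α σ γ t t = 0 := by
  set F : ℝ → ℝ := fun w => ∫ u in t..w, α u with hFdef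
  have hFc : Continuous F := myCont hα t
  have hF : ∀ v, HasDerivAt F (α v) v := myFTC hα t
  have hsplit : ∀ u v : ℝ, (∫ x in u..v, α x) = F v - F u := by
    intro u v
    rw [hFdef]
    simp only
    rw [intervalIntegral.integral_interval_sub_left (hα.intervalIntegrable t v)
      (hα.intervalIntegrable t u)]
  have hphi : ∀ u v : ℝ, phiR α u v = Real.exp (-F v) * Real.exp (F u) := by
    intro u v
    rw [phiR, hsplit, ← Real.exp_add]
    ring_nf
  set G : ℝ → ℝ := fun w => ∫ u in t..w, (Real.exp (F u)) ^ 2 * (σ u) ^ 2 with hGdef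
  have hGc : Continuous G := myCont (by fun_prop) t
  have hRR : ∀ v : ℝ, sigmaRR α σ t v = (Real.exp (-F v)) ^ 2 * G v := by
    intro v
    rw [sigmaRR, hGdef]
    simp only
    rw [← intervalIntegral.integral_const_mul]
    congr 1
    ext u
    rw [hphi]
    ring
  have hRRc : Continuous (fun v => sigmaRR α σ t v) := by
    simp only [hRR]; fun_prop
  have hpsic : Continuous (fun v => psiR α σ γ t v) := by
    simp only [psiR]; fun_prop
  set g : ℝ → ℝ := fun u => psiR α σ γ t u * Real.exp (F u) * sigmaRR α σ t u with hgdef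
  have hgc : Continuous g := by rw [hgdef]; fun_prop
  set H : ℝ → ℝ := fun w => ∫ u in t..w, g u with hHdef
  have hRZ : ∀ v : ℝ, sigmaRZ α σ γ t v = Real.exp (-F v) * H v := by
    intro v
    rw [sigmaRZ, hHdef]
    simp only
    rw [← intervalIntegral.integral_const_mul]
    congr 1
    ext u
    rw [hgdef]
    simp only
    rw [hphi]
    ring
  constructor
  · intro v
    have hd1 : HasDerivAt (fun w => Real.exp (-F w)) (Real.exp (-F v) * (-α v)) v :=
      ((hF v).neg).exp
    have hd2 : HasDerivAt H (g v) v := myFTC hgc t v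
    have hd : HasDerivAt (fun w => Real.exp (-F w) * H w)
        (Real.exp (-F v) * (-α v) * H v + Real.exp (-F v) * g v) v := hd1.mul hd2
    have heq : (fun w => sigmaRZ α σ γ t w) = fun w => Real.exp (-F w) * H w :=
      funext hRZ
    rw [heq]
    convert hd using 1
    rw [hRZ v, hgdef]
    simp only
    have h1 : Real.exp (-F v) * Real.exp (F v) = 1 := by
      rw [← Real.exp_add]; simp
    linear_combination (-(psiR α σ γ t v * sigmaRR α σ t v)) * h1
  · rw [sigmaRZ, intervalIntegral.integral_same]
end

section
/- Let r̄ : ℝ → ℝ be continuous, let D(t,T) := exp(−∫_t^T r̄(s) ds) and μ*(y,t,T) := B*(t,T)(y + Σ_rz(0,t)) + ½ B*(t,T)² Σ_rr(0,t). Then for fixed reals y and t, the function T ↦ −ln(D(t,T) e^{−μ*(y,t,T)}) is differentiable and its derivative at T equals r̄(T) + ψ_r(t,T) φ_r(t,T) (y + Σ_rz(0,t) + B*(t,T) Σ_rr(0,t)). This is the leading-order instantaneous forward rate of the model. -/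
open MeasureTheory intervalIntegral

/-!
Since `D(t,T) e^{−μ*} = exp(−∫_t^T r̄ − μ*)`, the function is `∫_t^T r̄ + μ*(y,t,T)`, a quadratic
polynomial in `B*(t,T)` plus a primitive of `r̄`; both are differentiated by the fundamental theorem
of calculus. The one point needing care is that `T ↦ ψ_r(t,T)` is continuous although the integrand
of `Σ_rr(t,T)` depends on `T`: the cocycle identity `φ_r(u,T) = φ_r(t,T) / φ_r(t,u)` pulls that
dependence out of the integral.
-/

section

variable {α : ℝ → ℝ} (σ γ : ℝ → ℝ)

lemma phiR_mul_phiR (hα : Continuous α) (s u v : ℝ) :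
    phiR α s u * phiR α u v = phiR α s v := by
  rw [phiR, phiR, phiR, ← Real.exp_add, ← neg_add,
    integral_add_adjacent_intervals (hα.intervalIntegrable _ _) (hα.intervalIntegrable _ _)]

lemma continuous_phiR (hα : Continuous α) (s : ℝ) : Continuous (phiR α s) :=
  Real.continuous_exp.comp (continuous_primitive (fun _ _ => hα.intervalIntegrable _ _) s).neg

lemma sigmaRR_eq_sq_phiR_mul (hα : Continuous α) (s v : ℝ) :
    sigmaRR α σ s v = phiR α s v ^ 2 * ∫ u in s..v, (σ u / phiR α s u) ^ 2 := by
  rw [sigmaRR, ← intervalIntegral.integral_const_mul]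
  refine integral_congr fun u _ => ?_
  have hsu : phiR α s u ≠ 0 := (Real.exp_pos _).ne'
  rw [← phiR_mul_phiR hα s u v]
  field_simp

lemma continuous_sigmaRR (hα : Continuous α) (hσ : Continuous σ) (s : ℝ) :
    Continuous (sigmaRR α σ s) := by
  have hquot : Continuous fun u => (σ u / phiR α s u) ^ 2 :=
    (hσ.div (continuous_phiR hα s) fun _ => (Real.exp_pos _).ne').pow 2
  have hprim : Continuous fun v => ∫ u in s..v, (σ u / phiR α s u) ^ 2 :=
    continuous_primitive (μ := volume) (fun _ _ => hquot.intervalIntegrable _ _) s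
  exact (((continuous_phiR hα s).pow 2).mul hprim).congr fun v =>
    (sigmaRR_eq_sq_phiR_mul σ hα s v).symm

lemma continuous_psiR (hα : Continuous α) (hσ : Continuous σ) (hγ : Continuous γ) (s : ℝ) :
    Continuous (psiR α σ γ s) :=
  Real.continuous_exp.comp
    ((continuous_const.mul (hγ.pow 2)).mul (continuous_sigmaRR σ hα hσ s))

lemma hasDerivAt_Bstar (hα : Continuous α) (hσ : Continuous σ) (hγ : Continuous γ) (s v : ℝ) :
    HasDerivAt (Bstar α σ γ s) (psiR α σ γ s v * phiR α s v) v :=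
  ((continuous_psiR σ γ hα hσ hγ s).mul (continuous_phiR hα s)).integral_hasStrictDerivAt s v
    |>.hasDerivAt

end

/-- For continuous `r̄`, with `D(t,T) := exp(−∫_t^T r̄)` and
`μ*(y,t,T) := B*(t,T)(y + Σ_rz(0,t)) + ½ B*(t,T)² Σ_rr(0,t)`, the function
`T ↦ −ln(D(t,T) e^{−μ*(y,t,T)})` is differentiable with derivative at `T` equal to
`r̄(T) + ψ_r(t,T) φ_r(t,T) (y + Σ_rz(0,t) + B*(t,T) Σ_rr(0,t))`: the leading-order
instantaneous forward rate of the model. -/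
theorem leading_order_forward_rate (α σ γ rbar : ℝ → ℝ)
    (hα : Continuous α) (hσ : Continuous σ) (hγ : Continuous γ)
    (hrbar : Continuous rbar) (y t : ℝ)
    (D : ℝ → ℝ → ℝ) (hD : ∀ t₁ T, D t₁ T = Real.exp (-∫ s in t₁..T, rbar s))
    (μstar : ℝ → ℝ → ℝ → ℝ)
    (hμ : ∀ y' t' T, μstar y' t' T =
      Bstar α σ γ t' T * (y' + sigmaRZ α σ γ 0 t')
        + (1 / 2) * (Bstar α σ γ t' T) ^ 2 * sigmaRR α σ 0 t') :
    ∀ T : ℝ, HasDerivAt (fun S => -Real.log (D t S * Real.exp (-μstar y t S)))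
      (rbar T + psiR α σ γ t T * phiR α t T
        * (y + sigmaRZ α σ γ 0 t + Bstar α σ γ t T * sigmaRR α σ 0 t)) T := by
  intro T
  set c₁ := y + sigmaRZ α σ γ 0 t
  set c₂ := sigmaRR α σ 0 t
  have hlog : (fun S => -Real.log (D t S * Real.exp (-μstar y t S)))
      = fun S => (∫ s in t..S, rbar s)
          + (Bstar α σ γ t S * c₁ + (1 / 2) * Bstar α σ γ t S ^ 2 * c₂) := by
    funext S
    rw [hD, ← Real.exp_add, Real.log_exp, hμ]
    ring
  have hB := hasDerivAt_Bstar σ γ hα hσ hγ t T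
  have hderiv := (hrbar.integral_hasStrictDerivAt t T).hasDerivAt.add
    ((hB.mul_const c₁).add (((hB.pow 2).const_mul (1 / 2 : ℝ)).mul_const c₂))
  rw [hlog]
  refine hderiv.congr_deriv ?_
  norm_num
  ring
end
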